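/- Let T = (Q, Σ, q0, δ) be a complete deterministic transition system with Q and Σ finite and nonempty and δ : Q × Σ → Q total, and let B = {F1, …, Fk} be a generalized Büchi condition with Fi ⊆ Q × Σ. For each i ≤ k consider the directed graph G_i on Q with an edge from p to δ(p, a) for every pair (p, a) ∉ Fi, and for each strongly connected component C of G_i let K_i(C) = {(p, a) ∈ Q × Σ : p ∈ C, (p, a) ∉ Fi, δ(p, a) ∈ C}. Define the generalized Büchi condition B' = {(Q × Σ) ∖ K_i(C) : i ≤ k, C a strongly connected component of G_i}. Then for every infinite word w ∈ Σ^ω, the set inf_T(w) intersects every Fi (i ≤ k) if and only if inf_T(w) intersects every member of B'; in particular, the deterministic generalized Büchi automata (T, B) and (T, B') accept the same language. -/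
import Mathlib


/-- The run of a complete deterministic transition system on an infinite
word. -/
def runT {Q A : Type*} (δ : Q → A → Q) (q0 : Q) (w : ℕ → A) : ℕ → Q
  | 0 => q0
  | n + 1 => δ (runT δ q0 w n) (w n)

/-- The infinity set of the run on `w`: the state-letter pairs occurring
infinitely often. -/
def infSet {Q A : Type*} (δ : Q → A → Q) (q0 : Q) (w : ℕ → A) : Set (Q × A) :=
  {qa | {n | runT δ q0 w n = qa.1 ∧ w n = qa.2}.Infinite}

/-- The edge relation of the graph `G_F`: an edge from `p` to `δ p a` for
every pair `(p, a) ∉ F`. -/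
def gstep {Q A : Type*} (δ : Q → A → Q) (F : Set (Q × A)) (p q : Q) : Prop :=
  ∃ a, (p, a) ∉ F ∧ δ p a = q

/-- Mutual reachability in the graph `G_F`. -/
def mutualReach {Q A : Type*} (δ : Q → A → Q) (F : Set (Q × A)) (p q : Q) : Prop :=
  Relation.ReflTransGen (gstep δ F) p q ∧ Relation.ReflTransGen (gstep δ F) q p

/-- The strongly connected components of `G_F`: equivalence classes of mutual
reachability. -/
def sccs {Q A : Type*} (δ : Q → A → Q) (F : Set (Q × A)) : Set (Set Q) :=
  {C | ∃ p : Q, C = {q | mutualReach δ F p q}}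

/-- `K(C)`: the non-`F` transitions internal to `C`. -/
def Kset {Q A : Type*} (δ : Q → A → Q) (F : Set (Q × A)) (C : Set Q) :
    Set (Q × A) :=
  {qa | qa.1 ∈ C ∧ qa ∉ F ∧ δ qa.1 qa.2 ∈ C}

lemma eventually_infSet {Q A : Type*} [Fintype Q] [Fintype A]
    (δ : Q → A → Q) (q0 : Q) (w : ℕ → A) :
    ∃ N : ℕ, ∀ n ≥ N, (runT δ q0 w n, w n) ∈ infSet δ q0 w := by
  have hfin : {n : ℕ | (runT δ q0 w n, w n) ∉ infSet δ q0 w}.Finite := by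
    have hsub : {n : ℕ | (runT δ q0 w n, w n) ∉ infSet δ q0 w} ⊆
        ⋃ qa ∈ (infSet δ q0 w)ᶜ, {n | runT δ q0 w n = qa.1 ∧ w n = qa.2} := by
      intro n hn
      exact Set.mem_biUnion hn ⟨rfl, rfl⟩
    refine Set.Finite.subset ?_ hsub
    refine Set.Finite.biUnion (Set.toFinite _) ?_
    intro qa hqa
    simpa [infSet, Set.not_infinite] using hqa
  obtain ⟨N, hN⟩ := hfin.bddAbove
  refine ⟨N + 1, fun n hn => ?_⟩
  by_contra h
  exact absurd (hN h) (by omega)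

lemma reach_run {Q A : Type*} (δ : Q → A → Q) (q0 : Q) (w : ℕ → A)
    (F : Set (Q × A)) (N : ℕ)
    (hN : ∀ n ≥ N, (runT δ q0 w n, w n) ∈ infSet δ q0 w)
    (hF : infSet δ q0 w ∩ F = ∅) :
    ∀ n m, N ≤ n → n ≤ m →
      Relation.ReflTransGen (gstep δ F) (runT δ q0 w n) (runT δ q0 w m) := by
  intro n m hn hm
  induction m, hm using Nat.le_induction with
  | base => exact Relation.ReflTransGen.refl
  | succ m hm ih =>
    refine ih.tail ⟨w m, ?_, rfl⟩
    intro hmem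
    have : (runT δ q0 w m, w m) ∈ infSet δ q0 w ∩ F :=
      ⟨hN m (le_trans hn hm), hmem⟩
    simp [hF] at this

/-- For a complete deterministic transition system
`(Q, Σ, q0, δ)` and a generalized Büchi condition `F 1, …, F k`, letting
`B' = {(Q × Σ) \ K_i(C) : i ≤ k, C SCC of G_{F i}}`, every infinite word has
its infinity set intersecting every `F i` iff it intersects every member of
`B'`; in particular `(T, B)` and `(T, B')` accept the same language. -/
theorem genBuchiCons_characteristic_language {Q A : Type*}
    [Fintype Q] [Nonempty Q] [Fintype A] [Nonempty A]
    (δ : Q → A → Q) (q0 : Q) (k : ℕ) (F : Fin k → Set (Q × A)) :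
    (∀ w : ℕ → A,
      (∀ i : Fin k, (infSet δ q0 w ∩ F i).Nonempty) ↔
      ∀ G ∈ {G | ∃ i : Fin k, ∃ C ∈ sccs δ (F i),
          G = Set.univ \ Kset δ (F i) C},
        (infSet δ q0 w ∩ G).Nonempty) ∧
    {w : ℕ → A | ∀ i : Fin k, (infSet δ q0 w ∩ F i).Nonempty} =
      {w : ℕ → A | ∀ G ∈ {G | ∃ i : Fin k, ∃ C ∈ sccs δ (F i),
          G = Set.univ \ Kset δ (F i) C},
        (infSet δ q0 w ∩ G).Nonempty} := by
  have main : ∀ w : ℕ → A,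
      (∀ i : Fin k, (infSet δ q0 w ∩ F i).Nonempty) ↔
      ∀ G ∈ {G | ∃ i : Fin k, ∃ C ∈ sccs δ (F i),
          G = Set.univ \ Kset δ (F i) C},
        (infSet δ q0 w ∩ G).Nonempty := by
    intro w
    constructor
    · rintro h G ⟨i, C, _, rfl⟩
      obtain ⟨⟨q, a⟩, hinf, hFi⟩ := h i
      exact ⟨(q, a), hinf, Set.mem_univ _, fun hK => hK.2.1 hFi⟩
    · intro h i
      by_contra hne
      have hF : infSet δ q0 w ∩ F i = ∅ :=
        Set.not_nonempty_iff_eq_empty.mp hne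
      obtain ⟨N, hN⟩ := eventually_infSet δ q0 w
      set p := runT δ q0 w N with hp
      set C : Set Q := {q | mutualReach δ (F i) p q} with hC
      -- every pair occurring infinitely often lies in Kset
      have hsub : infSet δ q0 w ⊆ Kset δ (F i) C := by
        rintro ⟨q, a⟩ hqa
        obtain ⟨n, hn, hnN⟩ := hqa.exists_gt N
        obtain ⟨hq, ha⟩ := hn
        dsimp only at hq ha
        have hNinf : (runT δ q0 w N, w N) ∈ infSet δ q0 w := hN N le_rfl
        have hback : ∀ m : ℕ, m ≤ m → True := fun _ _ => trivial
        have hqC : q ∈ C := by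
          constructor
          · rw [← hq]
            exact reach_run δ q0 w (F i) N hN hF N n le_rfl hnN.le
          · obtain ⟨m, hm, hmn⟩ := hNinf.exists_gt n
            have : Relation.ReflTransGen (gstep δ (F i))
                (runT δ q0 w n) (runT δ q0 w m) :=
              reach_run δ q0 w (F i) N hN hF n m hnN.le hmn.le
            rw [hq, hm.1] at this
            exact this
        refine ⟨hqC, ?_, ?_⟩
        · intro hmem
          have : (q, a) ∈ infSet δ q0 w ∩ F i := ⟨hqa, hmem⟩
          simp [hF] at this
        · have hδ : δ q a = runT δ q0 w (n + 1) := by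
            rw [← hq, ← ha]; rfl
          rw [hδ]
          constructor
          · exact reach_run δ q0 w (F i) N hN hF N (n + 1) le_rfl (by omega)
          · obtain ⟨m, hm, hmn⟩ := hNinf.exists_gt (n + 1)
            have : Relation.ReflTransGen (gstep δ (F i))
                (runT δ q0 w (n + 1)) (runT δ q0 w m) :=
              reach_run δ q0 w (F i) N hN hF (n + 1) m (by omega) hmn.le
            rw [hm.1] at this
            exact this
      obtain ⟨x, hx, _, hxK⟩ := h (Set.univ \ Kset δ (F i) C) ⟨i, C, ⟨p, rfl⟩, rfl⟩
      exact hxK (hsub hx)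
  exact ⟨main, Set.ext fun w => main w⟩
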